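/- arXiv:math/9911249 — 2 statements merged into one kernel-verified Lean document; each statement's English description precedes it below -/
import Mathlib

section
/- Every metrizable topological manifold is separable. -/
/-- A space is locally Euclidean if every point has an open neighbourhood
homeomorphic to some Euclidean space `ℝⁿ`. -/
def LocallyEuclidean (M : Type*) [TopologicalSpace M] : Prop :=
  ∀ x : M, ∃ (n : ℕ) (U : Set M), x ∈ U ∧ IsOpen U ∧ Nonempty (U ≃ₜ (Fin n → ℝ))

open Set TopologicalSpace

/-- A set homeomorphic (as a subspace) to `ℝⁿ` is separable. -/
lemma isSeparable_of_homeo {M : Type*} [TopologicalSpace M] {U : Set M} {n : ℕ}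
    (e : U ≃ₜ (Fin n → ℝ)) : IsSeparable U := by
  have : SeparableSpace U := e.symm.isQuotientMap.separableSpace
  exact IsSeparable.of_subtype U

/-- Every metrizable topological manifold is separable. -/
theorem metrizable_manifold_separable {M : Type*} [TopologicalSpace M]
    [T2Space M] [ConnectedSpace M] (h : LocallyEuclidean M)
    [TopologicalSpace.MetrizableSpace M] : TopologicalSpace.SeparableSpace M := by
  letI : MetricSpace M := TopologicalSpace.metrizableSpaceMetric M
  -- choose a separable open chart around each point
  choose n u hxu huo he using h
  have hsep : ∀ x, IsSeparable (u x) := fun x => isSeparable_of_homeo (he x).some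
  have huc : ⋃ x, u x = univ := eq_univ_of_forall fun x => mem_iUnion.2 ⟨x, hxu x⟩
  -- locally finite open refinement
  obtain ⟨v, hvo, hvc, hvlf, hvu⟩ := precise_refinement u huo huc
  have hvsep : ∀ i, IsSeparable (v i) := fun i => (hsep i).mono (hvu i)
  -- each `v i` meets only countably many `v j`
  have hN : ∀ i : M, {j : M | (v i ∩ v j).Nonempty}.Countable := by
    intro i
    obtain ⟨c, hc, hsc⟩ := hvsep i
    have hsub : {j : M | (v i ∩ v j).Nonempty} ⊆ ⋃ d ∈ c, {j : M | d ∈ v j} := by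
      rintro j ⟨p, hpi, hpj⟩
      have hp : p ∈ closure c := hsc hpi
      obtain ⟨d, hdj, hdc⟩ := mem_closure_iff.1 hp (v j) (hvo j) hpj
      exact mem_biUnion hdc hdj
    exact (hc.biUnion fun d _ => (hvlf.point_finite d).countable).mono hsub
  -- chain component
  obtain ⟨x₀⟩ : Nonempty M := inferInstance
  have hx₀ : ∃ i, x₀ ∈ v i := by
    have := hvc ▸ mem_univ x₀
    simpa using mem_iUnion.1 this
  obtain ⟨i₀, hi₀⟩ := hx₀
  set r : M → M → Prop := fun i j => (v i ∩ v j).Nonempty with hr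
  set R : Set M := {j | Relation.ReflTransGen r i₀ j} with hRdef
  set S : Set M := ⋃ j ∈ R, v j with hS
  -- S is clopen and nonempty
  have hSopen : IsOpen S := isOpen_biUnion fun j _ => hvo j
  have hSne : S.Nonempty := ⟨x₀, mem_biUnion Relation.ReflTransGen.refl hi₀⟩
  have hSclosed : IsClosed S := by
    rw [← isOpen_compl_iff, isOpen_iff_mem_nhds]
    intro x hx
    obtain ⟨j, hj⟩ : ∃ j, x ∈ v j := by
      have := hvc ▸ mem_univ x
      simpa using mem_iUnion.1 this
    refine Filter.mem_of_superset ((hvo j).mem_nhds hj) ?_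
    intro y hy hyS
    apply hx
    -- v j meets S, so j ∈ R
    have hjR : j ∈ R := by
      obtain ⟨i, hiR, z, hzi, hzj⟩ : ∃ i ∈ R, ∃ z, z ∈ v i ∧ z ∈ v j := by
        by_contra hcon
        push_neg at hcon
        have : y ∉ S := by
          intro hyS'
          obtain ⟨i, hiR, hyi⟩ := by simpa using mem_iUnion₂.1 hyS'
          exact hcon i hiR y hyi hy
        exact this hyS
      exact hiR.tail ⟨z, hzi, hzj⟩
    exact mem_biUnion hjR hj
  have hSuniv : S = univ := IsClopen.eq_univ ⟨hSclosed, hSopen⟩ hSne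
  -- R is countable
  have hRcount : R.Countable := by
    set C : ℕ → Set M := fun n => Nat.rec {i₀} (fun _ Cn => ⋃ i ∈ Cn, {j | r i j}) n with hC
    have hCc : ∀ n, (C n).Countable := by
      intro n
      induction n with
      | zero => exact countable_singleton i₀
      | succ n ih => exact ih.biUnion fun i _ => hN i
    have hRC : R ⊆ ⋃ n, C n := by
      intro j hj
      induction hj with
      | refl => exact mem_iUnion.2 ⟨0, rfl⟩
      | tail _ hbc ih =>
        obtain ⟨m, hm⟩ := mem_iUnion.1 ih
        exact mem_iUnion.2 ⟨m + 1, mem_biUnion hm hbc⟩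
    exact (countable_iUnion hCc).mono hRC
  -- conclude
  have : IsSeparable (univ : Set M) := by
    rw [← hSuniv, hS, biUnion_eq_iUnion]
    have : Countable R := hRcount.to_subtype
    exact IsSeparable.iUnion fun j => hvsep j
  exact isSeparable_univ_iff.1 this
end

section
/- A Lindelöf topological manifold is metrizable. -/
/-- A Lindelöf topological manifold is metrizable. -/
theorem lindelof_manifold_metrizable {M : Type*} [TopologicalSpace M]
    [T2Space M] [ConnectedSpace M] (h : LocallyEuclidean M)
    [LindelofSpace M] : TopologicalSpace.MetrizableSpace M := by
  choose n U mem open_ homeo using h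
  -- each chart is second countable
  have hsc : ∀ x : M, SecondCountableTopology (U x) := fun x => by
    obtain ⟨e⟩ := homeo x
    exact e.isEmbedding.secondCountableTopology
  -- weakly locally compact
  have hwlc : WeaklyLocallyCompactSpace M := by
    constructor
    intro x
    obtain ⟨e⟩ := homeo x
    have : LocallyCompactSpace (U x) := e.isEmbedding.locallyCompactSpace
      (by rw [e.range_coe]; exact isOpen_univ.isLocallyClosed)
    obtain ⟨K, hK, hKmem⟩ := exists_compact_mem_nhds (⟨x, mem x⟩ : U x)
    refine ⟨Subtype.val '' K, hK.image continuous_subtype_val, ?_⟩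
    exact ((open_ x).isOpenEmbedding_subtypeVal.map_nhds_eq ⟨x, mem x⟩) ▸
      Filter.image_mem_map hKmem
  have : LocallyCompactSpace M := inferInstance
  have : RegularSpace M := inferInstance
  -- countable subcover
  obtain ⟨t, tc, hcov⟩ := LindelofSpace.elim_nhds_subcover U
    (fun x => (open_ x).mem_nhds (mem x))
  haveI : Countable t := tc.to_subtype
  haveI : ∀ i : t, SecondCountableTopology (U i) := fun i => hsc i
  have : SecondCountableTopology M := by
    refine TopologicalSpace.secondCountableTopology_of_countable_cover (U := fun i : t => U i)
      (fun i => open_ i) ?_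
    simpa [Set.iUnion_subtype] using hcov
  infer_instance
end
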